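/- If f : G̃ → G is a harmonic morphism of graphs with local degree function d_f and G is connected, then the quantity ∑_{y ∈ f⁻¹(x)} d_f(y) is independent of the choice of point x ∈ G. -/
import Mathlib


open Finset

/-- for a harmonic morphism of graphs (vertices + half-edges with root map
and fixed-point-free involution) with connected target, the total local degree over a
point (vertex or half-edge) of the target is independent of the point. -/
theorem sum_local_degree_fiber_independent
    {Vt Ht V H : Type*} [Fintype Vt] [Fintype Ht] [Fintype V] [Fintype H]
    [DecidableEq Vt] [DecidableEq Ht] [DecidableEq V] [DecidableEq H]
    (rt : Ht → Vt) (revt : Ht → Ht)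
    (hrevt_invol : ∀ h, revt (revt h) = h) (hrevt_ne : ∀ h, revt h ≠ h)
    (r : H → V) (rev : H → H)
    (hrev_invol : ∀ h, rev (rev h) = h) (hrev_ne : ∀ h, rev h ≠ h)
    (fV : Vt → V) (fH : Ht → H)
    (hroot : ∀ h, fV (rt h) = r (fH h))
    (hrev : ∀ h, fH (revt h) = rev (fH h))
    (d : Vt ⊕ Ht → ℕ)
    (hd_pos : ∀ p, 0 < d p)
    (hd_edge : ∀ h, d (Sum.inr h) = d (Sum.inr (revt h)))
    (hharm : ∀ (v : Vt) (h : H), r h = fV v →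
      d (Sum.inl v)
        = ∑ h' ∈ Finset.univ.filter (fun h' => rt h' = v ∧ fH h' = h), d (Sum.inr h'))
    (hconn : ∀ p q : V ⊕ H,
      Relation.ReflTransGen
        (fun a b =>
          (∃ h : H, a = Sum.inl (r h) ∧ b = Sum.inr h) ∨
          (∃ h : H, b = Sum.inl (r h) ∧ a = Sum.inr h) ∨
          (∃ h : H, a = Sum.inr h ∧ b = Sum.inr (rev h))) p q)
    (x y : V ⊕ H) :
    ∑ p ∈ Finset.univ.filter (fun p => Sum.map fV fH p = x), d p
      = ∑ p ∈ Finset.univ.filter (fun p => Sum.map fV fH p = y), d p := by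
  classical
  set S : V ⊕ H → ℕ :=
    fun z => ∑ p ∈ Finset.univ.filter (fun p => Sum.map fV fH p = z), d p with hS
  have hSl : ∀ z : V, S (Sum.inl z)
      = ∑ v ∈ Finset.univ.filter (fun v => fV v = z), d (Sum.inl v) := by
    intro z
    simp only [hS, Finset.sum_filter, Fintype.sum_sum_type]
    simp
  have hSr : ∀ k : H, S (Sum.inr k)
      = ∑ h' ∈ Finset.univ.filter (fun h' => fH h' = k), d (Sum.inr h') := by
    intro k
    simp only [hS, Finset.sum_filter, Fintype.sum_sum_type]
    simp
  have step1 : ∀ h : H, S (Sum.inl (r h)) = S (Sum.inr h) := by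
    intro h
    rw [hSl, hSr]
    rw [← Finset.sum_fiberwise_of_maps_to (g := rt)
      (s := Finset.univ.filter (fun h' => fH h' = h))
      (t := Finset.univ.filter (fun v => fV v = r h))
      (by intro h' hh'
          simp only [Finset.mem_filter, Finset.mem_univ, true_and] at hh' ⊢
          rw [hroot, hh'])]
    refine Finset.sum_congr rfl fun v hv => ?_
    simp only [Finset.mem_filter, Finset.mem_univ, true_and] at hv
    rw [hharm v h hv.symm]
    congr 1
    ext h'
    simp [and_comm]
  have step2 : ∀ h : H, S (Sum.inr h) = S (Sum.inr (rev h)) := by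
    intro h
    rw [hSr, hSr]
    refine Finset.sum_nbij' (fun h' => revt h') (fun h' => revt h') ?_ ?_ ?_ ?_ ?_
    · intro h' hh'
      simp only [Finset.mem_filter, Finset.mem_univ, true_and] at hh' ⊢
      rw [hrev, hh']
    · intro h' hh'
      simp only [Finset.mem_filter, Finset.mem_univ, true_and] at hh' ⊢
      have := hrev h'
      rw [hh'] at this
      have h2 : fH (revt h') = rev (rev h) := this
      rw [hrev_invol] at h2
      exact h2
    · intro h' _; exact hrevt_invol h'
    · intro h' _; exact hrevt_invol h'
    · intro h' _; exact hd_edge h'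
  have key : ∀ a b, ((∃ h : H, a = Sum.inl (r h) ∧ b = Sum.inr h) ∨
      (∃ h : H, b = Sum.inl (r h) ∧ a = Sum.inr h) ∨
      (∃ h : H, a = Sum.inr h ∧ b = Sum.inr (rev h))) → S a = S b := by
    rintro a b (⟨h, rfl, rfl⟩ | ⟨h, rfl, rfl⟩ | ⟨h, rfl, rfl⟩)
    · exact step1 h
    · exact (step1 h).symm
    · exact step2 h
  show S x = S y
  induction hconn x y with
  | refl => rfl
  | tail _ hbc ih => exact ih.trans (key _ _ hbc)
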